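/- For all positive integers a and d, the distributive lattice J(P_{a,1,1,d}) is tCDE with edge density equal to 1; that is, E(μ; ddeg) = 1 for every toggle-symmetric distribution μ on J(P_{a,1,1,d}). -/

import Mathlib

open scoped Classical

noncomputable section

namespace CDEPaper

/-- The down-degree of `p`: the number of elements that `p` covers, as a real number. -/
def ddeg {α : Type*} [PartialOrder α] (p : α) : ℝ :=
  (Nat.card {q : α // q ⋖ p} : ℝ)

/-- The expectation of the statistic `f` with respect to the weights `μ`. -/
def expect {α : Type*} (μ : α → ℝ) (f : α → ℝ) : ℝ :=
  ∑ᶠ p, μ p * f p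

/-- The uniform distribution on a finite type. -/
def uni (α : Type*) : α → ℝ :=
  fun _ => (Nat.card α : ℝ)⁻¹

/-- `μ` is a probability distribution. -/
def IsProbDist {α : Type*} (μ : α → ℝ) : Prop :=
  (∀ x, 0 ≤ μ x) ∧ (∑ᶠ x, μ x) = 1

/-- The `k`-chain distribution: each `p` gets probability proportional to the number of
`k`-chains (strictly increasing sequences `c₀ < c₁ < ⋯ < c_k`) passing through `p`. -/
def chainDist (α : Type*) [PartialOrder α] (k : ℕ) : α → ℝ := fun p =>
  (Nat.card {c : Fin (k + 1) → α // StrictMono c ∧ ∃ i, c i = p} : ℝ) /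
    (((k : ℝ) + 1) * (Nat.card {c : Fin (k + 1) → α // StrictMono c} : ℝ))

/-- The `m`-multichain distribution: each `p` gets probability proportional to the number of
`m`-multichains (weakly increasing sequences) passing through `p`. -/
def mchainDist (α : Type*) [PartialOrder α] (m : ℕ) : α → ℝ := fun p =>
  (Nat.card {c : Fin (m + 1) → α // Monotone c ∧ ∃ i, c i = p} : ℝ) /
    (Nat.card {cq : (Fin (m + 1) → α) × α // Monotone cq.1 ∧ ∃ i, cq.1 i = cq.2} : ℝ)

/-- The modified `m`-multichain distribution: each `p` gets probability proportional to the
number of pairs `(c, i)` where `c` is an `m`-multichain and `c i = p`. -/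
def mhatDist (α : Type*) [PartialOrder α] (m : ℕ) : α → ℝ := fun p =>
  (Nat.card {ci : (Fin (m + 1) → α) × Fin (m + 1) // Monotone ci.1 ∧ ci.1 ci.2 = p} : ℝ) /
    (((m : ℝ) + 1) * (Nat.card {c : Fin (m + 1) → α // Monotone c} : ℝ))

/-- The maximal chain distribution: each `p` gets probability proportional to the number of
maximal chains passing through `p`. -/
def maxchainDist (α : Type*) [PartialOrder α] : α → ℝ := fun p =>
  (Nat.card {C : Set α // IsMaxChain (· ≤ ·) C ∧ p ∈ C} : ℝ) /
    (Nat.card {Cq : Set α × α // IsMaxChain (· ≤ ·) Cq.1 ∧ Cq.2 ∈ Cq.1} : ℝ)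

/-- A poset has coincidental down-degree expectations (CDE). -/
def IsCDE (α : Type*) [PartialOrder α] : Prop :=
  expect (maxchainDist α) ddeg = expect (uni α) ddeg

/-- A poset is mCDE: the expected down-degree with respect to the `k`-chain distribution agrees
with the uniform expected down-degree for every `k = 0, 1, …, r` (i.e. every `k` for which a
`k`-chain exists). -/
def IsMCDE (α : Type*) [PartialOrder α] : Prop :=
  ∀ k : ℕ, (∃ c : Fin (k + 1) → α, StrictMono c) →
    expect (chainDist α k) ddeg = expect (uni α) ddeg

/-- The distributive lattice `J(P)` of order ideals (lower sets) of a poset, ordered by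
inclusion. -/
abbrev OIdeal (α : Type*) [PartialOrder α] : Type _ := {I : Set α // IsLowerSet I}

/-- The indicator statistic that `p` can be toggled into the order ideal `I`. -/
def Tplus {α : Type*} [PartialOrder α] (p : α) (I : OIdeal α) : ℝ :=
  if p ∉ I.1 ∧ IsLowerSet (I.1 ∪ {p}) then 1 else 0

/-- The indicator statistic that `p` can be toggled out of the order ideal `I`. -/
def Tminus {α : Type*} [PartialOrder α] (p : α) (I : OIdeal α) : ℝ :=
  if p ∈ I.1 ∧ IsLowerSet (I.1 \ {p}) then 1 else 0

/-- A distribution on `J(P)` is toggle-symmetric if for every `p` the probability that `p` can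
be toggled in equals the probability that `p` can be toggled out. -/
def ToggleSymmetric {α : Type*} [PartialOrder α] (μ : OIdeal α → ℝ) : Prop :=
  ∀ p : α, expect μ (Tplus p) = expect μ (Tminus p)

/-- `J(P)` is toggle-CDE (tCDE): every toggle-symmetric probability distribution has the same
expected down-degree as the uniform distribution. -/
def IsTCDE (α : Type*) [PartialOrder α] : Prop :=
  ∀ μ : OIdeal α → ℝ, IsProbDist μ → ToggleSymmetric μ →
    expect μ ddeg = expect (uni (OIdeal α)) ddeg

end CDEPaper
namespace CDEPaper

/-! ### Skew shapes and shifted shapes -/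

/-- The boxes of the skew shape `λ/ν` of height `a`, in matrix coordinates with 1-based rows
and columns: row `i` (for `1 ≤ i ≤ a`) consists of the boxes `[i,j]` with `ν i < j ≤ λ i`.
The poset structure is the one induced from the componentwise (product) order on `ℕ × ℕ`. -/
def skewCells (a : ℕ) (lam nu : ℕ → ℕ) : Set (ℕ × ℕ) :=
  {b | 1 ≤ b.1 ∧ b.1 ≤ a ∧ nu b.1 < b.2 ∧ b.2 ≤ lam b.1}

/-- The boxes of the shifted Young diagram of a strict partition `λ` of length `l`:
the boxes `[i,j]` with `1 ≤ i ≤ l` and `i ≤ j ≤ λ i + i - 1`.  The poset structure is the one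
induced from the componentwise (product) order on `ℕ × ℕ`. -/
def shiftCells (l : ℕ) (lam : ℕ → ℕ) : Set (ℕ × ℕ) :=
  {b | 1 ≤ b.1 ∧ b.1 ≤ l ∧ b.1 ≤ b.2 ∧ b.2 < lam b.1 + b.1}

/-- The shifted rook statistic `R^shift_{ij}` on order ideals of (the poset of) `S`. -/
def Rshift (S : Set (ℕ × ℕ)) (i j : ℕ) (I : OIdeal ↥S) : ℝ :=
  (∑ᶠ (q : ↥S), if (q : ℕ × ℕ).1 ≤ i ∧ (q : ℕ × ℕ).2 ≤ j then Tplus q I else 0)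
    + (∑ᶠ (q : ↥S), if i ≤ (q : ℕ × ℕ).1 ∧ j ≤ (q : ℕ × ℕ).2 then Tminus q I else 0)
    - (∑ᶠ (q : ↥S),
        if (q : ℕ × ℕ).1 < i ∧ (q : ℕ × ℕ).2 < j ∧ (q : ℕ × ℕ).1 < (q : ℕ × ℕ).2 then
          Tminus q I else 0)
    - (∑ᶠ (q : ↥S),
        if i < (q : ℕ × ℕ).1 ∧ j < (q : ℕ × ℕ).2 ∧ (q : ℕ × ℕ).1 < (q : ℕ × ℕ).2 then
          Tplus q I else 0)

/-- The shifted diagram of `λ` (of length `l`) has an outward corner indexed by `i'`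
(a north step followed by an east step on the southeast border, occurring at the lattice point
`(i', λ (i'+1) + i')`) if and only if `1 ≤ i' < l` and `λ i' ≥ λ (i'+1) + 2`. -/
def IsCorner (l : ℕ) (lam : ℕ → ℕ) (i' : ℕ) : Prop :=
  1 ≤ i' ∧ i' + 1 ≤ l ∧ lam (i' + 1) + 2 ≤ lam i'

/-- An order ideal `I ∈ J(P_λ^shift)` contains the outward corner indexed by `i'`
(i.e. the lattice path of `I` contains both steps of the corner):  equivalently, `I` contains
both the last box `[i'+1, λ(i'+1)+i']` of row `i'+1` and the box `[i', λ(i'+1)+i'+1]`. -/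
def ContainsCorner (l : ℕ) (lam : ℕ → ℕ) (I : OIdeal ↥(shiftCells l lam)) (i' : ℕ) : Prop :=
  (∃ q : ↥(shiftCells l lam), (q : ℕ × ℕ) = (i' + 1, lam (i' + 1) + i') ∧ q ∈ I.1) ∧
  (∃ q : ↥(shiftCells l lam), (q : ℕ × ℕ) = (i', lam (i' + 1) + i' + 1) ∧ q ∈ I.1)

/-- A (not necessarily strict) partition `ν` (with parts `ν 1 ≥ ν 2 ≥ ⋯`) which, viewed as a
straight shape, is balanced with height and width both equal to `k`:  it has exactly `k`
nonzero parts, its first part is `k`, and every outward corner of its boundary path (which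
occurs at the point `(i, ν (i+1))` whenever `ν i > ν (i+1)`) lies on the anti-diagonal
`i + j = k` of the `k × k` square. -/
def BalancedSquare (k : ℕ) (nu : ℕ → ℕ) : Prop :=
  (∀ i, 1 ≤ i → nu (i + 1) ≤ nu i) ∧
  (∀ i, 1 ≤ i → i ≤ k → 1 ≤ nu i) ∧
  (∀ i, k < i → nu i = 0) ∧
  nu 1 = k ∧
  (∀ i, 1 ≤ i → i + 1 ≤ k → nu (i + 1) < nu i → i + nu (i + 1) = k)

/-- The poset `P_{a,1,1,d}`: a bottom chain `w₁ < ⋯ < w_a`, two incomparable elements `x, y`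
covering `w_a`, and a top chain `z₁ < ⋯ < z_d` with `z₁` covering both `x` and `y`.
It is realized inside `ℕ × ℕ` (with the componentwise order) as
`w_i = (i,i)`, `x = (a+1, a)`, `y = (a, a+1)`, `z_j = (a+j, a+j)`. -/
def Pa11d (a d : ℕ) : Set (ℕ × ℕ) :=
  {p | (1 ≤ p.1 ∧ p.1 ≤ a ∧ p.2 = p.1) ∨ p = (a + 1, a) ∨ p = (a, a + 1) ∨
    (∃ j, 1 ≤ j ∧ j ≤ d ∧ p = (a + j, a + j))}

/-! ### Shifted set-valued tableaux

Letters of the primed alphabet `1 < 1' < 2 < 2' < ⋯` are encoded as natural numbers: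
the letter `m : ℕ` has value `m / 2 + 1` and is primed iff `m` is odd
(so `0 ↦ 1, 1 ↦ 1', 2 ↦ 2, 3 ↦ 2', …`); the order on letters is the usual order on `ℕ`. -/

/-- The value of a letter. -/
def letterVal (m : ℕ) : ℕ := m / 2 + 1

/-- `T` is a shifted set-valued tableau of shape given by the box set `S`:  each box gets a
finite nonempty set of letters, all entries of a box weakly precede all entries of any strictly
larger box, each unprimed letter appears at most once in each column, and each primed letter
appears at most once in each row. -/
def IsSSVT (S : Set (ℕ × ℕ)) (T : ↥S → Finset ℕ) : Prop :=
  (∀ u, (T u).Nonempty) ∧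
  (∀ u v : ↥S, u < v → ∀ x ∈ T u, ∀ y ∈ T v, x ≤ y) ∧
  (∀ u v : ↥S, u ≠ v → (u : ℕ × ℕ).2 = (v : ℕ × ℕ).2 →
    ∀ m : ℕ, m % 2 = 0 → ¬(m ∈ T u ∧ m ∈ T v)) ∧
  (∀ u v : ↥S, u ≠ v → (u : ℕ × ℕ).1 = (v : ℕ × ℕ).1 →
    ∀ m : ℕ, m % 2 = 1 → ¬(m ∈ T u ∧ m ∈ T v))

/-- `T` is standard: distinct entry occurrences have distinct values, and the values used are
exactly `1, 2, …, N` where `N` is the total number of entries. -/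
def IsStandardT (S : Set (ℕ × ℕ)) (T : ↥S → Finset ℕ) : Prop :=
  (∀ u v : ↥S, ∀ x ∈ T u, ∀ y ∈ T v, letterVal x = letterVal y → u = v ∧ x = y) ∧
  (∀ m : ℕ, 1 ≤ m → m ≤ ∑ᶠ (u : ↥S), (T u).card → ∃ u : ↥S, ∃ x ∈ T u, letterVal x = m)

/-- `T` is barely set-valued: exactly one box has two entries; all other boxes have one. -/
def IsBarelySetValued (S : Set (ℕ × ℕ)) (T : ↥S → Finset ℕ) : Prop :=
  ∃ u₀ : ↥S, (T u₀).card = 2 ∧ ∀ u : ↥S, u ≠ u₀ → (T u).card = 1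

/-- `T` is unprimed: no primed letters appear. -/
def IsUnprimed (S : Set (ℕ × ℕ)) (T : ↥S → Finset ℕ) : Prop :=
  ∀ u : ↥S, ∀ x ∈ T u, x % 2 = 0

/-- `g^λ`: the number of unprimed standard shifted tableaux of shape `λ`. -/
def gShift (l : ℕ) (lam : ℕ → ℕ) : ℕ :=
  Nat.card {T : ↥(shiftCells l lam) → Finset ℕ //
    IsSSVT (shiftCells l lam) T ∧ IsStandardT (shiftCells l lam) T ∧
    (∀ u, (T u).card = 1) ∧ IsUnprimed (shiftCells l lam) T}

/-- The number of standard shifted barely set-valued tableaux of shape `λ`. -/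
def numBarelySVT (l : ℕ) (lam : ℕ → ℕ) : ℕ :=
  Nat.card {T : ↥(shiftCells l lam) → Finset ℕ //
    IsSSVT (shiftCells l lam) T ∧ IsStandardT (shiftCells l lam) T ∧
    IsBarelySetValued (shiftCells l lam) T}

/-! ### Toggles, rowmotion, orbits -/

/-- The toggle `τ_p` on order ideals. -/
def toggle {α : Type*} [PartialOrder α] (p : α) (I : OIdeal α) : OIdeal α :=
  if h : p ∉ I.1 ∧ IsLowerSet (I.1 ∪ {p}) then ⟨I.1 ∪ {p}, h.2⟩
  else if h' : p ∈ I.1 ∧ IsLowerSet (I.1 \ {p}) then ⟨I.1 \ {p}, h'.2⟩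
  else I

/-- The composition of the toggles along a list, applied head first. -/
def applyToggles {α : Type*} [PartialOrder α] (L : List α) (I : OIdeal α) : OIdeal α :=
  L.foldl (fun J p => toggle p J) I

/-- The forward orbit of `x` under `Φ` (for invertible `Φ` on a finite set, the orbit). -/
def orbit {β : Type*} (Φ : β → β) (x : β) : Set β := {y | ∃ n : ℕ, Φ^[n] x = y}

/-- The probability distribution that is uniform on the orbit of `x` under `Φ` and zero
outside of it. -/
def orbitDist {β : Type*} (Φ : β → β) (x : β) : β → ℝ := fun y =>
  if y ∈ orbit Φ x then (Nat.card ↥(orbit Φ x) : ℝ)⁻¹ else 0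

/-- Rowmotion on order ideals: `I ↦ {x : x ≤ y for some minimal element y of P \ I}`. -/
def rowmotion {α : Type*} [PartialOrder α] (I : OIdeal α) : OIdeal α :=
  ⟨{x | ∃ y, (y ∉ I.1 ∧ ∀ z, z ∉ I.1 → z ≤ y → z = y) ∧ x ≤ y}, by
    intro a b hba ha
    obtain ⟨y, hy, hay⟩ := ha
    exact ⟨y, hy, le_trans hba hay⟩⟩

/-- The antichain cardinality statistic `I ↦ #max(I)`. -/
def antichainCard {α : Type*} [PartialOrder α] (I : OIdeal α) : ℝ :=
  (Nat.card {p : α // p ∈ I.1 ∧ ∀ q, q ∈ I.1 → p ≤ q → p = q} : ℝ)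

end CDEPaper

/-!
Since `ddeg I = ∑ p, Tminus p I`, toggle-symmetry of `μ` gives
`E(μ; ddeg) = E(μ; ∑ p, (g p * Tplus p + (1 - g p) * Tminus p))` for any weights `g`.
On `P_{a,1,1,d}` take `g = 1` on the bottom chain, `g = 1/2` on `x` and `y`, and `g = 0` on the
top chain; the statistic is then identically `1`. Indeed, the bottom chain contributes `1`
exactly when it is not contained in `I` (its least element outside `I` can be toggled in), the
top chain contributes `1` exactly when it meets `I` (its largest element in `I` can be toggled
out), and in the remaining case each of `x`, `y` can be toggled one way or the other,
contributing `1/2 + 1/2`.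
-/

namespace CDEPaper

section Toggles

variable {α : Type*} [PartialOrder α]

lemma isLowerSet_union_singleton_iff {s : Set α} (hs : IsLowerSet s) {p : α} :
    IsLowerSet (s ∪ {p}) ↔ ∀ v < p, v ∈ s := by
  refine ⟨fun h v hv => (h hv.le (Or.inr rfl)).resolve_right hv.ne, fun h u v hvu hu => ?_⟩
  rcases hu with hu | rfl
  · exact Or.inl (hs hvu hu)
  · rcases hvu.lt_or_eq with hlt | rfl
    · exact Or.inl (h v hlt)
    · exact Or.inr rfl

lemma isLowerSet_diff_singleton_iff {s : Set α} (hs : IsLowerSet s) {p : α} :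
    IsLowerSet (s \ {p}) ↔ ∀ v ∈ s, ¬ p < v :=
  ⟨fun h _ hv hpv => (h hpv.le ⟨hv, hpv.ne'⟩).2 rfl,
    fun h => hs.erase fun b hb hpb => (hpb.lt_or_eq.resolve_left (h b hb)).symm⟩

lemma Tplus_eq_ite (p : α) (I : OIdeal α) :
    Tplus p I = if p ∉ I.1 ∧ ∀ v < p, v ∈ I.1 then 1 else 0 := by
  simp only [Tplus, isLowerSet_union_singleton_iff I.2]

lemma Tminus_eq_ite (p : α) (I : OIdeal α) :
    Tminus p I = if p ∈ I.1 ∧ ∀ v ∈ I.1, ¬ p < v then 1 else 0 := by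
  simp only [Tminus, isLowerSet_diff_singleton_iff I.2]

variable {p v : α} {I : OIdeal α}

lemma Tplus_eq_one (hp : p ∉ I.1) (h : ∀ v < p, v ∈ I.1) : Tplus p I = 1 := by
  rw [Tplus_eq_ite, if_pos ⟨hp, h⟩]

lemma Tplus_eq_zero_of_mem (hp : p ∈ I.1) : Tplus p I = 0 := by
  rw [Tplus_eq_ite, if_neg fun h => h.1 hp]

lemma Tplus_eq_zero_of_lt (hv : v < p) (hvI : v ∉ I.1) : Tplus p I = 0 := by
  rw [Tplus_eq_ite, if_neg fun h => hvI (h.2 v hv)]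

lemma Tminus_eq_one (hp : p ∈ I.1) (h : ∀ v ∈ I.1, ¬ p < v) : Tminus p I = 1 := by
  rw [Tminus_eq_ite, if_pos ⟨hp, h⟩]

lemma Tminus_eq_zero_of_notMem (hp : p ∉ I.1) : Tminus p I = 0 := by
  rw [Tminus_eq_ite, if_neg fun h => hp h.1]

lemma Tminus_eq_zero_of_lt (hv : p < v) (hvI : v ∈ I.1) : Tminus p I = 0 := by
  rw [Tminus_eq_ite, if_neg fun h => h.2 v hvI hv]

lemma Tplus_add_Tminus_eq_one (hbelow : ∀ v < p, v ∈ I.1) (habove : ∀ v ∈ I.1, ¬ p < v) :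
    Tplus p I + Tminus p I = 1 := by
  by_cases hp : p ∈ I.1
  · rw [Tplus_eq_zero_of_mem hp, Tminus_eq_one hp habove, zero_add]
  · rw [Tplus_eq_one hp hbelow, Tminus_eq_zero_of_notMem hp, add_zero]

lemma Tplus_add_Tminus_eq_zero_of_lt_of_notMem (hv : v < p) (hvI : v ∉ I.1) :
    Tplus p I + Tminus p I = 0 := by
  have hp : p ∉ I.1 := fun hp => hvI (I.2 hv.le hp)
  rw [Tplus_eq_zero_of_lt hv hvI, Tminus_eq_zero_of_notMem hp, add_zero]

lemma Tplus_add_Tminus_eq_zero_of_lt_of_mem (hv : p < v) (hvI : v ∈ I.1) :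
    Tplus p I + Tminus p I = 0 := by
  rw [Tplus_eq_zero_of_mem (I.2 hv.le hvI), Tminus_eq_zero_of_lt hv hvI, add_zero]

lemma sum_Tplus_of_isChain_of_isLowerSet [Fintype α] {C : Finset α}
    (hchain : IsChain (· ≤ ·) (C : Set α)) (hlow : IsLowerSet (C : Set α)) (I : OIdeal α) :
    ∑ p ∈ C, Tplus p I = if (C : Set α) ⊆ I.1 then 0 else 1 := by
  split_ifs with hCI
  · exact Finset.sum_eq_zero fun p hp => Tplus_eq_zero_of_mem (hCI hp)
  obtain ⟨m, hm⟩ :=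
    (Set.toFinite ((C : Set α) \ I.1)).exists_minimal (Set.sdiff_nonempty.mpr hCI)
  rw [Finset.sum_eq_single_of_mem m hm.prop.1]
  · exact Tplus_eq_one hm.prop.2 fun v hv => by
      by_contra hvI
      exact hm.not_prop_of_lt hv ⟨hlow hv.le hm.prop.1, hvI⟩
  · intro q hq hqm
    by_cases hqI : q ∈ I.1
    · exact Tplus_eq_zero_of_mem hqI
    have hmq : m ≤ q := (hchain.total hm.prop.1 hq).resolve_right
      fun hqm' => hqm (le_antisymm hqm' (hm.2 ⟨hq, hqI⟩ hqm'))
    exact Tplus_eq_zero_of_lt (lt_of_le_of_ne hmq (Ne.symm hqm)) hm.prop.2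

lemma sum_Tminus_of_isChain_of_isUpperSet [Fintype α] {C : Finset α}
    (hchain : IsChain (· ≤ ·) (C : Set α)) (hup : IsUpperSet (C : Set α)) (I : OIdeal α) :
    ∑ p ∈ C, Tminus p I = if ∃ p ∈ C, p ∈ I.1 then 1 else 0 := by
  split_ifs with hCI
  swap
  · simp only [not_exists, not_and] at hCI
    exact Finset.sum_eq_zero fun p hp => Tminus_eq_zero_of_notMem (hCI p hp)
  obtain ⟨m, hm⟩ := (Set.toFinite ((C : Set α) ∩ I.1)).exists_maximal
    (by obtain ⟨p, hp, hpI⟩ := hCI; exact ⟨p, hp, hpI⟩)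
  rw [Finset.sum_eq_single_of_mem m hm.prop.1]
  · exact Tminus_eq_one hm.prop.2 fun v hvI hv => hm.not_prop_of_gt hv ⟨hup hv.le hm.prop.1, hvI⟩
  · intro q hq hqm
    by_cases hqI : q ∈ I.1
    swap
    · exact Tminus_eq_zero_of_notMem hqI
    have hqm' : q ≤ m := (hchain.total hm.prop.1 hq).resolve_left
      fun hmq => hqm (le_antisymm (hm.2 ⟨hq, hqI⟩ hmq) hmq)
    exact Tminus_eq_zero_of_lt (lt_of_le_of_ne hqm' hqm) hm.prop.2

end Toggles

section Expectations

variable {α : Type*} [PartialOrder α] [Fintype α]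

lemma sum_ite_one_zero_eq_natCard {β : Type*} [Fintype β] (P : β → Prop) [DecidablePred P] :
    ∑ b, (if P b then (1 : ℝ) else 0) = Nat.card {b // P b} := by
  rw [Finset.sum_boole, Nat.card_eq_fintype_card, Fintype.card_subtype]

lemma covBy_iff_exists_diff_singleton {J I : OIdeal α} :
    J ⋖ I ↔ ∃ (p : α) (hp : p ∈ I.1 ∧ IsLowerSet (I.1 \ {p})), J = ⟨I.1 \ {p}, hp.2⟩ := by
  constructor
  · intro hJ
    have hJI : J.1 ⊂ I.1 := hJ.lt
    -- removing a maximal element of `I \ J` from `I` leaves an ideal between `J` and `I`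
    obtain ⟨p, hp⟩ :=
      (Set.toFinite (I.1 \ J.1)).exists_maximal (Set.sdiff_nonempty.mpr hJI.not_subset)
    have hlow : IsLowerSet (I.1 \ {p}) := (isLowerSet_diff_singleton_iff I.2).mpr
      fun v hv hpv => hp.not_prop_of_gt hpv ⟨hv, fun hvJ => hp.prop.2 (J.2 hpv.le hvJ)⟩
    refine ⟨p, ⟨hp.prop.1, hlow⟩, ?_⟩
    by_contra hne
    refine hJ.2 (lt_of_le_of_ne (fun v hv => ⟨hJI.subset hv, ?_⟩) hne) (c := ⟨_, hlow⟩) ?_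
    · rintro rfl
      exact hp.prop.2 hv
    · exact Set.sdiff_singleton_ssubset.mpr hp.prop.1
  · rintro ⟨p, hp, rfl⟩
    exact (Set.sdiff_singleton_covBy hp.1).of_image (OrderEmbedding.subtype _)

lemma ddeg_eq_sum_Tminus (I : OIdeal α) : ddeg I = ∑ p, Tminus p I := by
  simp only [Tminus]
  rw [sum_ite_one_zero_eq_natCard, ddeg]
  congr 1
  refine (Nat.card_eq_of_bijective (fun p => ⟨⟨I.1 \ {p.1}, p.2.2⟩,
    covBy_iff_exists_diff_singleton.mpr ⟨p.1, p.2, rfl⟩⟩) ⟨?_, ?_⟩).symm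
  · rintro ⟨p, hp⟩ ⟨q, hq⟩ hpq
    have hdiff : I.1 \ {p} = I.1 \ {q} :=
      congrArg (fun J : OIdeal α => J.1) (congrArg Subtype.val hpq)
    by_contra hne
    have : q ∈ I.1 \ {p} := ⟨hq.1, fun h => hne (Subtype.ext h.symm)⟩
    exact (hdiff ▸ this).2 rfl
  · rintro ⟨J, hJ⟩
    obtain ⟨p, hp, rfl⟩ := covBy_iff_exists_diff_singleton.mp hJ
    exact ⟨⟨p, hp⟩, rfl⟩

def addableEquivRemovable (p : α) :
    {I : OIdeal α // p ∉ I.1 ∧ IsLowerSet (I.1 ∪ {p})} ≃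
      {I : OIdeal α // p ∈ I.1 ∧ IsLowerSet (I.1 \ {p})} where
  toFun I := ⟨⟨I.1.1 ∪ {p}, I.2.2⟩, Or.inr rfl, by
    rw [Set.union_sdiff_cancel_right (Set.disjoint_singleton_right.mpr I.2.1).le_bot]
    exact I.1.2⟩
  invFun I := ⟨⟨I.1.1 \ {p}, I.2.2⟩, fun h => h.2 rfl, by
    rw [Set.sdiff_union_of_subset (Set.singleton_subset_iff.mpr I.2.1)]
    exact I.1.2⟩
  left_inv I := by
    ext : 2
    exact Set.union_sdiff_cancel_right (Set.disjoint_singleton_right.mpr I.2.1).le_bot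
  right_inv I := by
    ext : 2
    exact Set.sdiff_union_of_subset (Set.singleton_subset_iff.mpr I.2.1)

lemma isProbDist_uni {β : Type*} [Fintype β] [Nonempty β] : IsProbDist (uni β) := by
  refine ⟨fun _ => inv_nonneg.mpr (Nat.cast_nonneg _), ?_⟩
  rw [finsum_eq_sum_of_fintype]
  simp [uni, Nat.card_eq_fintype_card]

lemma toggleSymmetric_uni : ToggleSymmetric (uni (OIdeal α)) := by
  intro p
  simp only [expect, uni, finsum_eq_sum_of_fintype, ← Finset.mul_sum, Tplus, Tminus]
  rw [sum_ite_one_zero_eq_natCard, sum_ite_one_zero_eq_natCard,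
    Nat.card_congr (addableEquivRemovable p)]

theorem ToggleSymmetric.expect_ddeg_eq_one {μ : OIdeal α → ℝ} (hts : ToggleSymmetric μ)
    (hμ : IsProbDist μ) (g : α → ℝ)
    (hg : ∀ I : OIdeal α, ∑ p, (g p * Tplus p I + (1 - g p) * Tminus p I) = 1) :
    expect μ ddeg = 1 := by
  have hts' (p : α) : ∑ I, μ I * Tplus p I = ∑ I, μ I * Tminus p I := by
    simpa only [expect, finsum_eq_sum_of_fintype] using hts p
  calc expect μ ddeg = ∑ p, ∑ I, μ I * Tminus p I := by
        simp only [expect, finsum_eq_sum_of_fintype, ddeg_eq_sum_Tminus, Finset.mul_sum]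
        exact Finset.sum_comm
    _ = ∑ p, (g p * ∑ I, μ I * Tplus p I + (1 - g p) * ∑ I, μ I * Tminus p I) := by
        refine Finset.sum_congr rfl fun p _ => ?_
        rw [hts' p]
        ring
    _ = ∑ I, μ I * ∑ p, (g p * Tplus p I + (1 - g p) * Tminus p I) := by
        simp only [Finset.mul_sum, ← Finset.sum_add_distrib]
        rw [Finset.sum_comm]
        refine Finset.sum_congr rfl fun I _ => Finset.sum_congr rfl fun p _ => ?_
        ring
    _ = 1 := by simpa only [hg, mul_one, finsum_eq_sum_of_fintype] using hμ.2

end Expectations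

section PosetPa11d

variable {a d : ℕ}

lemma Pa11d_cases {p : ℕ × ℕ} (hp : p ∈ Pa11d a d) :
    (p.1 = p.2 ∧ p.1 ≤ a + d) ∨ (p.1 = a + 1 ∧ p.2 = a) ∨ (p.1 = a ∧ p.2 = a + 1) := by
  rcases hp with h | rfl | rfl | ⟨j, -, hj, rfl⟩ <;> omega

lemma Pa11d_finite (a d : ℕ) : (Pa11d a d).Finite :=
  (Set.finite_Iic (a + d + 1, a + d + 1)).subset fun p hp => by
    have := Pa11d_cases hp
    exact Prod.mk_le_mk.mpr ⟨by omega, by omega⟩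

instance (a d : ℕ) : Fintype ↥(Pa11d a d) := (Pa11d_finite a d).fintype

lemma Pa11d_le_iff {q r : ↥(Pa11d a d)} : q ≤ r ↔ q.1.1 ≤ r.1.1 ∧ q.1.2 ≤ r.1.2 := Iff.rfl

lemma Pa11d_lt_iff {q r : ↥(Pa11d a d)} :
    q < r ↔ (q.1.1 ≤ r.1.1 ∧ q.1.2 ≤ r.1.2) ∧ ¬(r.1.1 ≤ q.1.1 ∧ r.1.2 ≤ q.1.2) :=
  lt_iff_le_not_ge

def bottomChain (a d : ℕ) : Finset ↥(Pa11d a d) := {q | q.1.1 = q.1.2 ∧ q.1.1 ≤ a}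

def topChain (a d : ℕ) : Finset ↥(Pa11d a d) := {q | q.1.1 = q.1.2 ∧ a < q.1.1}

def middlePair (a d : ℕ) : Finset ↥(Pa11d a d) := {q | q.1.1 ≠ q.1.2}

lemma isChain_of_forall_diagonal {s : Set ↥(Pa11d a d)} (hs : ∀ q ∈ s, q.1.1 = q.1.2) :
    IsChain (· ≤ ·) s := fun q hq r hr _ => by
  have := hs q hq
  have := hs r hr
  simp only [Pa11d_le_iff]
  omega

lemma isChain_bottomChain : IsChain (· ≤ ·) (bottomChain a d : Set ↥(Pa11d a d)) :=
  isChain_of_forall_diagonal fun _ hq => (Finset.mem_filter.mp hq).2.1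

lemma isChain_topChain : IsChain (· ≤ ·) (topChain a d : Set ↥(Pa11d a d)) :=
  isChain_of_forall_diagonal fun _ hq => (Finset.mem_filter.mp hq).2.1

lemma isLowerSet_bottomChain : IsLowerSet (bottomChain a d : Set ↥(Pa11d a d)) := by
  intro q r hrq hq
  simp only [Finset.mem_coe, bottomChain, Finset.mem_filter, Finset.mem_univ, true_and,
    Pa11d_le_iff] at hq hrq ⊢
  have := Pa11d_cases r.2
  omega

lemma isUpperSet_topChain : IsUpperSet (topChain a d : Set ↥(Pa11d a d)) := by
  intro q r hqr hq
  simp only [Finset.mem_coe, topChain, Finset.mem_filter, Finset.mem_univ, true_and,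
    Pa11d_le_iff] at hq hqr ⊢
  have := Pa11d_cases r.2
  omega

lemma card_middlePair : (middlePair a d).card = 2 := by
  rw [Finset.card_eq_two]
  refine ⟨⟨(a + 1, a), Or.inr (Or.inl rfl)⟩, ⟨(a, a + 1), Or.inr (Or.inr (Or.inl rfl))⟩,
    fun h => by simp only [Subtype.ext_iff, Prod.ext_iff] at h; omega, ?_⟩
  ext q
  have := Pa11d_cases q.2
  simp only [middlePair, Finset.mem_filter, Finset.mem_univ, true_and, Finset.mem_insert,
    Finset.mem_singleton, Subtype.ext_iff, Prod.ext_iff]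
  omega

lemma le_of_mem_bottomChain_of_mem_topChain {b z : ↥(Pa11d a d)} (hb : b ∈ bottomChain a d)
    (hz : z ∈ topChain a d) : b ≤ z := by
  simp only [bottomChain, topChain, Finset.mem_filter, Finset.mem_univ, true_and] at hb hz
  rw [Pa11d_le_iff]
  omega

section MiddlePair

variable {m v : ↥(Pa11d a d)}

lemma lt_iff_mem_bottomChain_of_mem_middlePair (hm : m ∈ middlePair a d) :
    v < m ↔ v ∈ bottomChain a d := by
  simp only [bottomChain, middlePair, Finset.mem_filter, Finset.mem_univ, true_and,
    Pa11d_lt_iff] at hm ⊢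
  have := Pa11d_cases m.2
  have := Pa11d_cases v.2
  omega

lemma lt_iff_mem_topChain_of_mem_middlePair (hm : m ∈ middlePair a d) :
    m < v ↔ v ∈ topChain a d := by
  simp only [topChain, middlePair, Finset.mem_filter, Finset.mem_univ, true_and,
    Pa11d_lt_iff] at hm ⊢
  have := Pa11d_cases m.2
  have := Pa11d_cases v.2
  omega

lemma Tplus_add_Tminus_of_mem_middlePair (hm : m ∈ middlePair a d) (I : OIdeal ↥(Pa11d a d)) :
    Tplus m I + Tminus m I =
      if (bottomChain a d : Set ↥(Pa11d a d)) ⊆ I.1 ∧ ¬∃ z ∈ topChain a d, z ∈ I.1 then 1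
      else 0 := by
  split_ifs with h
  · exact Tplus_add_Tminus_eq_one
      (fun v hv => h.1 ((lt_iff_mem_bottomChain_of_mem_middlePair hm).mp hv))
      (fun v hvI hv => h.2 ⟨v, (lt_iff_mem_topChain_of_mem_middlePair hm).mp hv, hvI⟩)
  · rw [not_and_or, not_not, Set.not_subset] at h
    rcases h with ⟨b, hb, hbI⟩ | ⟨z, hz, hzI⟩
    · exact Tplus_add_Tminus_eq_zero_of_lt_of_notMem
        ((lt_iff_mem_bottomChain_of_mem_middlePair hm).mpr hb) hbI
    · exact Tplus_add_Tminus_eq_zero_of_lt_of_mem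
        ((lt_iff_mem_topChain_of_mem_middlePair hm).mpr hz) hzI

end MiddlePair

lemma sum_middlePair (I : OIdeal ↥(Pa11d a d)) :
    ∑ m ∈ middlePair a d, (Tplus m I + Tminus m I) / 2 =
      if (bottomChain a d : Set ↥(Pa11d a d)) ⊆ I.1 ∧ ¬∃ z ∈ topChain a d, z ∈ I.1 then 1
      else 0 := by
  rw [Finset.sum_congr rfl fun m hm => by rw [Tplus_add_Tminus_of_mem_middlePair hm I],
    Finset.sum_const, card_middlePair]
  split_ifs <;> norm_num

def toggleWeight (a d : ℕ) (q : ↥(Pa11d a d)) : ℝ :=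
  if q ∈ bottomChain a d then 1 else if q ∈ topChain a d then 0 else 1 / 2

lemma sum_toggleWeight_eq (I : OIdeal ↥(Pa11d a d)) :
    ∑ q, (toggleWeight a d q * Tplus q I + (1 - toggleWeight a d q) * Tminus q I) =
      ∑ q ∈ bottomChain a d, Tplus q I + ∑ q ∈ middlePair a d, (Tplus q I + Tminus q I) / 2 +
        ∑ q ∈ topChain a d, Tminus q I := by
  simp only [bottomChain, middlePair, topChain, Finset.sum_filter, ← Finset.sum_add_distrib]
  refine Finset.sum_congr rfl fun q _ => ?_
  simp only [toggleWeight, bottomChain, topChain, Finset.mem_filter, Finset.mem_univ, true_and]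
  split_ifs <;> first | omega | ring

lemma sum_toggleWeight_eq_one (I : OIdeal ↥(Pa11d a d)) :
    ∑ q, (toggleWeight a d q * Tplus q I + (1 - toggleWeight a d q) * Tminus q I) = 1 := by
  rw [sum_toggleWeight_eq, sum_middlePair,
    sum_Tplus_of_isChain_of_isLowerSet isChain_bottomChain isLowerSet_bottomChain,
    sum_Tminus_of_isChain_of_isUpperSet isChain_topChain isUpperSet_topChain]
  by_cases hZ : ∃ z ∈ topChain a d, z ∈ I.1
  · have hB : (bottomChain a d : Set ↥(Pa11d a d)) ⊆ I.1 := by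
      obtain ⟨z, hz, hzI⟩ := hZ
      exact fun b hb => I.2 (le_of_mem_bottomChain_of_mem_topChain hb hz) hzI
    simp [hB, hZ]
  · by_cases hB : (bottomChain a d : Set ↥(Pa11d a d)) ⊆ I.1 <;> simp [hB, hZ]

end PosetPa11d

theorem statement14_general (a d : ℕ) :
    (∀ μ : OIdeal ↥(Pa11d a d) → ℝ, IsProbDist μ → ToggleSymmetric μ →
        expect μ ddeg = 1) ∧
      expect (uni (OIdeal ↥(Pa11d a d))) ddeg = 1 := by
  have h (μ : OIdeal ↥(Pa11d a d) → ℝ) (hμ : IsProbDist μ) (hts : ToggleSymmetric μ) :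
      expect μ ddeg = 1 :=
    hts.expect_ddeg_eq_one hμ (toggleWeight a d) sum_toggleWeight_eq_one
  have : Nonempty (OIdeal ↥(Pa11d a d)) := ⟨⟨∅, isLowerSet_empty⟩⟩
  exact ⟨h, h _ isProbDist_uni toggleSymmetric_uni⟩

/-- Proposition `prop:posabcdcde`.  For all positive integers `a` and `d`,
the distributive lattice `J(P_{a,1,1,d})` is tCDE with edge density `1`: `E(μ; ddeg) = 1` for
every toggle-symmetric probability distribution `μ` on `J(P_{a,1,1,d})`. -/
theorem statement14 (a d : ℕ) (ha : 1 ≤ a) (hd : 1 ≤ d) :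
    (∀ μ : OIdeal ↥(Pa11d a d) → ℝ, IsProbDist μ → ToggleSymmetric μ →
        expect μ ddeg = 1) ∧
      expect (uni (OIdeal ↥(Pa11d a d))) ddeg = 1 :=
  statement14_general a d

end CDEPaper
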